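/- For every order automorphism φ of (E, E₊) there exist integers a, b, c, d with ad − bc = ±1 and a positive real number λ that is a unit of the ring R = ℤ[1/5] + ℤ[1/5]√3 (i.e., λ ∈ R and λ⁻¹ ∈ R) such that φ(r, x, y) = (λr, ax + by, cx + dy) for all (r, x, y) ∈ E. -/

import Mathlib

/-- The additive subgroup `E` of `ℝ × ℤ × ℤ`: all triples `(r, x, y)` such that
`r = (j + k√3)/5^(6i)`, `x ≡ j (mod 9)` and `y ≡ k (mod 3)` for some integers `i, j, k`. -/
def Eset : Set (ℝ × ℤ × ℤ) :=
  {p | ∃ i j k : ℤ, p.1 = ((j : ℝ) + (k : ℝ) * Real.sqrt 3) / (5 : ℝ) ^ (6 * i) ∧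
    p.2.1 ≡ j [ZMOD 9] ∧ p.2.2 ≡ k [ZMOD 3]}

/-- The positive cone `E₊ = {(r, x, y) ∈ E : r > 0} ∪ {(0, 0, 0)}`. -/
def Epos : Set (ℝ × ℤ × ℤ) :=
  {p | p ∈ Eset ∧ 0 < p.1} ∪ {0}

/-- An order automorphism of `(E, E₊)`: an additive group automorphism of `E`
(a bijection of `E` onto itself which is additive on `E`) with `φ(E₊) = E₊`. -/
structure IsOrderAuto (φ : ℝ × ℤ × ℤ → ℝ × ℤ × ℤ) : Prop where
  bijOn : Set.BijOn φ Eset Eset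
  addOn : ∀ p ∈ Eset, ∀ q ∈ Eset, φ (p + q) = φ p + φ q
  posEq : φ '' Epos = Epos

/-- `ℤ[1/5]`, as a subset of `ℝ`: rationals of the form `m / 5^i` with `m, i ∈ ℤ`. -/
def ZOneFifth : Set ℝ :=
  {r : ℝ | ∃ m i : ℤ, r = (m : ℝ) / (5 : ℝ) ^ i}

/-- The subring `R = ℤ[1/5] + ℤ[1/5]√3` of `ℝ`. -/
def Rring : Set ℝ :=
  {r : ℝ | ∃ a b : ℝ, a ∈ ZOneFifth ∧ b ∈ ZOneFifth ∧ r = a + b * Real.sqrt 3}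

/-! Being additive on `E`, `φ` splits into a real part and an integer part, both additive maps
on `E`. The real part preserves positivity of the real coordinate, and an additive map to `ℝ`
that preserves the positivity of another one is a scalar multiple of it (by rational
approximation); the scalar `λ` and its inverse are real coordinates of elements of `E`, hence lie
in `R`. The integer part kills every element of `E` with zero integer coordinates, since such an
element is divisible in `E` by every power of `5⁶` while no nonzero integer is; so it is given by
an integer matrix, which is invertible over `ℤ` because `φ` is surjective. -/

theorem AddMonoidHom.eq_mul_of_pos_imp_pos {G : Type*} [AddGroup G] (f g : G →+ ℝ) {e : G}
    (he : f e = 1) (hpos : ∀ x, 0 < f x → 0 < g x) (x : G) : g x = g e * f x := by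
  have hc : 0 < g e := hpos e (by rw [he]; exact one_pos)
  have hle : ∀ x, g x ≤ g e * f x := by
    intro x
    by_contra! h
    obtain ⟨q, hfq, hqg⟩ := exists_rat_btwn ((lt_div_iff₀' hc).2 h)
    have hden : (0 : ℝ) < q.den := by exact_mod_cast q.pos
    rw [Rat.cast_def, lt_div_iff₀ hden] at hfq
    rw [Rat.cast_def, div_lt_div_iff₀ hden hc] at hqg
    have := hpos (q.num • e - (q.den : ℤ) • x) (by simp [he]; linarith)
    simp only [map_sub, map_zsmul, zsmul_eq_mul, Int.cast_natCast] at this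
    linarith
  have := hle (-x)
  simp only [map_neg] at this
  exact le_antisymm (hle x) (by linarith)

theorem AddMonoidHom.eq_zero_of_forall_pow_smul_eq {G : Type*} [AddGroup G] (f : G →+ ℤ)
    {m : ℕ} (hm : 1 < m) {x : G} (hx : ∀ n : ℕ, ∃ y, ((m ^ n : ℕ) : ℤ) • y = x) : f x = 0 := by
  set N := (f x).natAbs
  obtain ⟨y, hy⟩ := hx N
  have hfx : f x = ((m ^ N : ℕ) : ℤ) * f y := by rw [← smul_eq_mul, ← map_zsmul, hy]
  refine Int.eq_zero_of_dvd_of_natAbs_lt_natAbs (Dvd.intro _ hfx.symm) ?_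
  rw [Int.natAbs_natCast]
  exact Nat.lt_pow_self hm

theorem det_eq_one_or_neg_one_of_mul_eq_one {a b c d p q r s : ℤ} (h₁ : a * p + b * r = 1)
    (h₂ : a * q + b * s = 0) (h₃ : c * q + d * s = 1) :
    a * d - b * c = 1 ∨ a * d - b * c = -1 :=
  -- `(ad - bc)(ps - qr) = (ap + br)(cq + ds) - (aq + bs)(cp + dr)`
  Int.isUnit_iff.mp <| .of_mul_eq_one (p * s - q * r) <| by
    linear_combination (c * q + d * s) * h₁ + h₃ - (c * p + d * r) * h₂

def EsetWitness (p : ℝ × ℤ × ℤ) (i j k : ℤ) : Prop :=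
  p.1 = ((j : ℝ) + (k : ℝ) * Real.sqrt 3) / (5 : ℝ) ^ (6 * i) ∧
    p.2.1 ≡ j [ZMOD 9] ∧ p.2.2 ≡ k [ZMOD 3]

theorem mem_Eset_iff {p : ℝ × ℤ × ℤ} : p ∈ Eset ↔ ∃ i j k, EsetWitness p i j k := Iff.rfl

theorem five_pow_six_pow_modEq_nine (n : ℕ) : ((5 ^ 6) ^ n : ℤ) ≡ 1 [ZMOD 9] := by
  simpa using (show (5 ^ 6 : ℤ) ≡ 1 [ZMOD 9] by decide).pow n

namespace EsetWitness

variable {p q : ℝ × ℤ × ℤ} {i j k j' k' : ℤ}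

theorem shift (h : EsetWitness p i j k) (n : ℕ) :
    EsetWitness p (i + n) ((5 ^ 6) ^ n * j) ((5 ^ 6) ^ n * k) := by
  obtain ⟨h₁, h₂, h₃⟩ := h
  have h9 := five_pow_six_pow_modEq_nine n
  have h3 : ((5 ^ 6) ^ n : ℤ) ≡ 1 [ZMOD 3] := (show _ ≡ _ [ZMOD 3 * 3] from h9).of_mul_left 3
  refine ⟨?_, h₂.trans (by simpa using (h9.mul_right j).symm),
    h₃.trans (by simpa using (h3.mul_right k).symm)⟩
  rw [h₁, mul_add, zpow_add₀ (by norm_num), zpow_mul, zpow_mul, zpow_natCast]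
  push_cast
  field_simp
  norm_num

theorem exists_of_le (h : EsetWitness p i j k) {N : ℤ} (hN : i ≤ N) :
    ∃ j' k', EsetWitness p N j' k' := by
  obtain ⟨n, rfl⟩ := Int.le.dest hN
  exact ⟨_, _, h.shift n⟩

theorem add (hp : EsetWitness p i j k) (hq : EsetWitness q i j' k') :
    EsetWitness (p + q) i (j + j') (k + k') := by
  obtain ⟨hp₁, hp₂, hp₃⟩ := hp
  obtain ⟨hq₁, hq₂, hq₃⟩ := hq
  refine ⟨?_, hp₂.add hq₂, hp₃.add hq₃⟩
  rw [Prod.fst_add, hp₁, hq₁]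
  push_cast
  ring

theorem neg (hp : EsetWitness p i j k) : EsetWitness (-p) i (-j) (-k) := by
  obtain ⟨hp₁, hp₂, hp₃⟩ := hp
  refine ⟨?_, hp₂.neg, hp₃.neg⟩
  rw [Prod.fst_neg, hp₁]
  push_cast
  ring

end EsetWitness

def Esubgroup : AddSubgroup (ℝ × ℤ × ℤ) where
  carrier := Eset
  zero_mem' := ⟨0, 0, 0, by simp, .refl _, .refl _⟩
  add_mem' := by
    intro p q hp hq
    obtain ⟨i, j, k, hp⟩ := mem_Eset_iff.mp hp
    obtain ⟨i', j', k', hq⟩ := mem_Eset_iff.mp hq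
    obtain ⟨j₁, k₁, hp'⟩ := hp.exists_of_le (le_max_left i i')
    obtain ⟨j₂, k₂, hq'⟩ := hq.exists_of_le (le_max_right i i')
    exact ⟨_, _, _, hp'.add hq'⟩
  neg_mem' := by
    intro p hp
    obtain ⟨i, j, k, hp⟩ := mem_Eset_iff.mp hp
    exact ⟨_, _, _, hp.neg⟩

theorem exists_pow_smul_eq_of_snd_eq_zero {p : ℝ × ℤ × ℤ} (hp : p ∈ Eset) (h : p.2 = 0)
    (n : ℕ) : ∃ y ∈ Eset, (((5 ^ 6) ^ n : ℕ) : ℤ) • y = p := by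
  obtain ⟨i, j, k, hp₁, hp₂, hp₃⟩ := hp
  have hx : p.2.1 = 0 := congrArg Prod.fst h
  have hy : p.2.2 = 0 := congrArg Prod.snd h
  refine ⟨(p.1 / (5 ^ 6) ^ n, 0, 0), ⟨i + n, j, k, ?_, hx ▸ hp₂, hy ▸ hp₃⟩, ?_⟩
  · rw [hp₁, mul_add, zpow_add₀ (by norm_num), zpow_mul, zpow_mul, zpow_natCast]
    field_simp
  · ext
    · rw [Prod.smul_fst, zsmul_eq_mul]
      push_cast
      field_simp
      ring
    · simp [hx]
    · simp [hy]

noncomputable def e₁ : ℝ × ℤ × ℤ := (1, 1, 0)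
noncomputable def e₂ : ℝ × ℤ × ℤ := (Real.sqrt 3, 0, 1)

theorem e₁_mem : e₁ ∈ Eset := ⟨0, 1, 0, by simp [e₁], .refl _, .refl _⟩
theorem e₂_mem : e₂ ∈ Eset := ⟨0, 0, 1, by simp [e₂], .refl _, .refl _⟩

theorem fst_mem_Rring {p : ℝ × ℤ × ℤ} (hp : p ∈ Eset) : p.1 ∈ Rring := by
  obtain ⟨i, j, k, h, -, -⟩ := hp
  refine ⟨j / 5 ^ (6 * i), k / 5 ^ (6 * i), ⟨j, 6 * i, rfl⟩, ⟨k, 6 * i, rfl⟩, ?_⟩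
  rw [h]
  ring

namespace IsOrderAuto

variable {φ : ℝ × ℤ × ℤ → ℝ × ℤ × ℤ}

def toAddMonoidHom (hφ : IsOrderAuto φ) : Esubgroup →+ ℝ × ℤ × ℤ :=
  AddMonoidHom.mk' (fun p => φ p) fun p q => hφ.addOn p p.2 q q.2

theorem toAddMonoidHom_apply (hφ : IsOrderAuto φ) (p : Esubgroup) :
    hφ.toAddMonoidHom p = φ p := rfl

theorem fst_pos (hφ : IsOrderAuto φ) {p : ℝ × ℤ × ℤ} (hp : p ∈ Eset) (h : 0 < p.1) :
    0 < (φ p).1 := by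
  have hφp : φ p ∈ Epos := hφ.posEq ▸ ⟨p, .inl ⟨hp, h⟩, rfl⟩
  rcases hφp with hφp | hφp
  · exact hφp.2
  · have : p = 0 :=
      hφ.bijOn.injOn hp Esubgroup.zero_mem (hφp.trans (map_zero hφ.toAddMonoidHom).symm)
    simp [this] at h

theorem fst_apply (hφ : IsOrderAuto φ) {p : ℝ × ℤ × ℤ} (hp : p ∈ Eset) :
    (φ p).1 = (φ e₁).1 * p.1 :=
  AddMonoidHom.eq_mul_of_pos_imp_pos ((AddMonoidHom.fst ℝ (ℤ × ℤ)).comp Esubgroup.subtype)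
    ((AddMonoidHom.fst ℝ (ℤ × ℤ)).comp hφ.toAddMonoidHom) (e := ⟨e₁, e₁_mem⟩) rfl
    (fun x hx => hφ.fst_pos x.2 hx) ⟨p, hp⟩

theorem snd_eq_zero (hφ : IsOrderAuto φ) {p : ℝ × ℤ × ℤ} (hp : p ∈ Eset) (h : p.2 = 0) :
    (φ p).2 = 0 := by
  let g : Esubgroup →+ ℤ × ℤ := (AddMonoidHom.snd ℝ (ℤ × ℤ)).comp hφ.toAddMonoidHom
  have hdiv (n : ℕ) : ∃ y : Esubgroup, (((5 ^ 6) ^ n : ℕ) : ℤ) • y = ⟨p, hp⟩ := by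
    obtain ⟨y, hy, hyp⟩ := exists_pow_smul_eq_of_snd_eq_zero hp h n
    exact ⟨⟨y, hy⟩, Subtype.ext hyp⟩
  ext
  · exact ((AddMonoidHom.fst ℤ ℤ).comp g).eq_zero_of_forall_pow_smul_eq (by norm_num) hdiv
  · exact ((AddMonoidHom.snd ℤ ℤ).comp g).eq_zero_of_forall_pow_smul_eq (by norm_num) hdiv

theorem snd_apply (hφ : IsOrderAuto φ) {p : ℝ × ℤ × ℤ} (hp : p ∈ Eset) :
    (φ p).2 = p.2.1 • (φ e₁).2 + p.2.2 • (φ e₂).2 := by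
  let Φ := hφ.toAddMonoidHom
  let P : Esubgroup := ⟨p, hp⟩
  let Q : Esubgroup := p.2.1 • ⟨e₁, e₁_mem⟩ + p.2.2 • ⟨e₂, e₂_mem⟩
  have hPQ : (↑(P - Q) : ℝ × ℤ × ℤ).2 = 0 := by ext <;> simp [P, Q, e₁, e₂]
  calc (φ p).2 = (Φ Q).2 + (Φ (P - Q)).2 := by
        rw [← Prod.snd_add, ← map_add, add_sub_cancel]; rfl
    _ = (Φ Q).2 := by
        rw [toAddMonoidHom_apply hφ (P - Q), hφ.snd_eq_zero (P - Q).2 hPQ, add_zero]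
    _ = p.2.1 • (φ e₁).2 + p.2.2 • (φ e₂).2 := by
        rw [map_add, map_zsmul, map_zsmul]; rfl

end IsOrderAuto

/-- For every order automorphism `φ` of `(E, E₊)` there exist integers `a, b, c, d` with
`ad − bc = ±1` and a positive real `λ` which is a unit of `R = ℤ[1/5] + ℤ[1/5]√3`
(i.e. `λ ∈ R` and `λ⁻¹ ∈ R`) such that `φ(r, x, y) = (λr, ax + by, cx + dy)` on `E`. -/
theorem stmt_11 (φ : ℝ × ℤ × ℤ → ℝ × ℤ × ℤ) (hφ : IsOrderAuto φ) :
    ∃ (a b c d : ℤ) (l : ℝ),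
      (a * d - b * c = 1 ∨ a * d - b * c = -1) ∧
      0 < l ∧ l ∈ Rring ∧ l⁻¹ ∈ Rring ∧
      ∀ p ∈ Eset, φ p = (l * p.1, a * p.2.1 + b * p.2.2, c * p.2.1 + d * p.2.2) := by
  obtain ⟨w₁, hw₁, hφw₁⟩ := hφ.bijOn.surjOn e₁_mem
  obtain ⟨w₂, hw₂, hφw₂⟩ := hφ.bijOn.surjOn e₂_mem
  have h₁ := hφ.snd_apply hw₁
  have h₂ := hφ.snd_apply hw₂
  rw [hφw₁, show e₁.2 = (1, 0) from rfl] at h₁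
  rw [hφw₂, show e₂.2 = (0, 1) from rfl] at h₂
  simp only [Prod.ext_iff, Prod.fst_add, Prod.snd_add, Prod.smul_fst, Prod.smul_snd,
    smul_eq_mul] at h₁ h₂
  refine ⟨(φ e₁).2.1, (φ e₂).2.1, (φ e₁).2.2, (φ e₂).2.2, (φ e₁).1, ?_,
    hφ.fst_pos e₁_mem (by simp [e₁]), fst_mem_Rring (hφ.bijOn.mapsTo e₁_mem), ?_, fun p hp => ?_⟩
  · exact det_eq_one_or_neg_one_of_mul_eq_one (p := w₁.2.1) (r := w₁.2.2) (q := w₂.2.1)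
      (s := w₂.2.2) (by linear_combination -h₁.1) (by linear_combination -h₂.1)
      (by linear_combination -h₂.2)
  · have : (φ e₁).1 * w₁.1 = 1 := by simpa [hφw₁, e₁] using (hφ.fst_apply hw₁).symm
    rw [inv_eq_of_mul_eq_one_right this]
    exact fst_mem_Rring hw₁
  · refine Prod.ext (hφ.fst_apply hp) ?_
    rw [hφ.snd_apply hp]
    ext <;> simp [mul_comm]
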